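/- arXiv:0802.4207 — 6 statements merged into one kernel-verified Lean document; each statement's English description precedes it below -/
import Mathlib

section
/- Let d ≥ 2, k ≥ 3, C = {u ∈ ℝ≥0^d : k·u_i − u_d ≥ 0 for i = 1,…,d−1}, f_i = e_i for i < d, f_d = k·e_d + e_1 + ⋯ + e_{d−1}, and D_0 = {0} ∪ {j·e_d + e_1 + ⋯ + e_{d−1} : j = 1,…,k−1}. Then the lattice points C ∩ ℤ^d decompose as the disjoint union over u ∈ D_0 of the sets u + span_{ℕ}{f_1,…,f_d} (nonnegative integer combinations). -/
/-!
Coordinatewise, `y = v + ∑ cᵢ fᵢ` says `y_d = v_d + k c_d` and `yᵢ = vᵢ + cᵢ + c_d` for `i < d`.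
A point of `D_0` is determined by its last coordinate `r ∈ [0, k)`, its other coordinates being
`[r ≠ 0]`. So division with remainder of `y_d` by `k` forces `r` and `c_d`, and then every `cᵢ`;
these are nonnegative exactly when `yᵢ ≥ ⌈y_d / k⌉`, i.e. `y_d ≤ k yᵢ`.
-/

/-- The generators `f_1, …, f_d` : `f_i = e_i` for `i < d-1`, and
`f_d = k·e_d + e_1 + ⋯ + e_{d-1}`. -/
def coneGen (d k : ℕ) (i : Fin d) : Fin d → ℤ :=
  if i.val < d - 1 then Pi.single i 1
  else fun j : Fin d => if j.val < d - 1 then 1 else (k : ℤ)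

-- The left-hand side is `⌈a / k⌉`.
theorem Int.ediv_add_ite_le_of_le_mul {a b k : ℤ} (hk : 0 < k) (h : a ≤ k * b) :
    a / k + (if a % k = 0 then 0 else 1) ≤ b := by
  have hdiv := Int.emod_add_mul_ediv a k
  have hmod := Int.emod_nonneg a hk.ne'
  split_ifs with hr
  · exact le_of_mul_le_mul_left (by linarith) hk
  · have : a / k < b := lt_of_mul_lt_mul_left (by omega) hk.le
    omega

variable {d k : ℕ} {L : Fin d}

theorem sum_smul_coneGen_apply_of_lt (hL : L.val = d - 1) (c : Fin d → ℤ) {j : Fin d}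
    (hj : j.val < d - 1) : (∑ i, c i • coneGen d k i) j = c j + c L := by
  rw [Finset.sum_apply, Fintype.sum_eq_add j L (fun h => by omega)]
  · simp [coneGen, hj, hL]
  · rintro i ⟨hij, hiL⟩
    have hi : i.val < d - 1 := by have := Fin.val_ne_of_ne hiL; omega
    simp [coneGen, hi, Ne.symm hij]

theorem sum_smul_coneGen_apply_last (hL : L.val = d - 1) (c : Fin d → ℤ) :
    (∑ i, c i • coneGen d k i) L = k * c L := by
  rw [Finset.sum_apply, Fintype.sum_eq_single L]
  · simp [coneGen, hL, mul_comm]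
  · intro i hiL
    have hi : i.val < d - 1 := by have := Fin.val_ne_of_ne hiL; omega
    simp [coneGen, hi, hiL.symm]

/-- The set `D_0`. -/
def offsets (d k : ℕ) : Set (Fin d → ℤ) :=
  {v | v = 0 ∨ ∃ j : ℕ, 1 ≤ j ∧ j ≤ k - 1 ∧ v = fun i : Fin d => if i.val < d - 1 then 1 else (j : ℤ)}

/-- For `0 ≤ r < k`, the point of `D_0` whose last coordinate is `r`. -/
def offset (d : ℕ) (r : ℤ) : Fin d → ℤ :=
  fun i => if i.val < d - 1 then (if r = 0 then 0 else 1) else r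

theorem mem_offsets_iff (hk : 0 < k) {v : Fin d → ℤ} :
    v ∈ offsets d k ↔ ∃ r : ℤ, 0 ≤ r ∧ r < k ∧ v = offset d r := by
  constructor
  · rintro (rfl | ⟨j, hj1, hjk, rfl⟩)
    · exact ⟨0, le_rfl, by exact_mod_cast hk, by ext; simp [offset]⟩
    · refine ⟨j, by positivity, by omega, ?_⟩
      ext
      simp [offset, show j ≠ 0 by omega]
  · rintro ⟨r, hr0, hrk, rfl⟩
    obtain rfl | hr := eq_or_ne r 0
    · left; ext; simp [offset]
    · right
      refine ⟨r.toNat, by omega, by omega, ?_⟩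
      ext
      simp [offset, hr, hr0]

theorem eq_offset_add_sum_smul_coneGen_iff (hL : L.val = d - 1) (y : Fin d → ℤ) (r : ℤ)
    (c : Fin d → ℤ) :
    y = offset d r + ∑ i, c i • coneGen d k i ↔
      y L = r + k * c L ∧ ∀ j : Fin d, j.val < d - 1 → y j = (if r = 0 then 0 else 1) + c j + c L := by
  rw [funext_iff]
  constructor
  · intro hy
    refine ⟨?_, fun j hj => ?_⟩
    · rw [hy L, Pi.add_apply, sum_smul_coneGen_apply_last hL]
      simp [offset, hL]
    · rw [hy j, Pi.add_apply, sum_smul_coneGen_apply_of_lt hL _ hj]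
      simp [offset, hj, add_assoc]
  · rintro ⟨hyL, hy⟩ j
    rw [Pi.add_apply]
    by_cases hj : j.val < d - 1
    · rw [sum_smul_coneGen_apply_of_lt hL _ hj, hy j hj]
      simp [offset, hj, add_assoc]
    · obtain rfl : j = L := Fin.ext (by omega)
      rw [sum_smul_coneGen_apply_last hL, hyL]
      simp [offset, hL]

theorem exists_mem_offsets_eq_add_sum (hk : 0 < k) (hL : L.val = d - 1) {y : Fin d → ℤ}
    (hy0 : ∀ i, 0 ≤ y i) (hyk : ∀ i : Fin d, i.val < d - 1 → y L ≤ k * y i) :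
    ∃ p : (Fin d → ℤ) × (Fin d → ℕ),
      p.1 ∈ offsets d k ∧ y = p.1 + ∑ i, (p.2 i : ℤ) • coneGen d k i := by
  have hk' : (0 : ℤ) < k := by exact_mod_cast hk
  set q := y L / k
  set r := y L % k
  let c : Fin d → ℤ := fun j => if j.val < d - 1 then y j - (if r = 0 then 0 else 1) - q else q
  have hc : ∀ j, ((c j).toNat : ℤ) = c j := by
    intro j
    refine Int.toNat_of_nonneg ?_
    by_cases hj : j.val < d - 1
    · have := Int.ediv_add_ite_le_of_le_mul hk' (hyk j hj)
      simp only [c, hj, if_true]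
      omega
    · simpa [c, hj] using Int.ediv_nonneg (hy0 L) hk'.le
  refine ⟨(offset d r, fun j => (c j).toNat),
    (mem_offsets_iff hk).2 ⟨r, Int.emod_nonneg _ hk'.ne', Int.emod_lt_of_pos _ hk', rfl⟩, ?_⟩
  simp only [hc]
  rw [eq_offset_add_sum_smul_coneGen_iff hL]
  refine ⟨?_, fun j hj => ?_⟩
  · simp only [c, hL, lt_irrefl, if_false]
    exact (Int.emod_add_mul_ediv _ _).symm
  · simp only [c, hj, hL, lt_irrefl, if_true, if_false]
    ring

theorem nonneg_and_last_le_of_mem_offsets_eq_add_sum (hk : 0 < k) (hL : L.val = d - 1)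
    {y v : Fin d → ℤ} {c : Fin d → ℕ} (hv : v ∈ offsets d k)
    (hy : y = v + ∑ i, (c i : ℤ) • coneGen d k i) :
    (∀ i, 0 ≤ y i) ∧ ∀ i : Fin d, i.val < d - 1 → y L ≤ k * y i := by
  obtain ⟨r, hr0, hrk, rfl⟩ := (mem_offsets_iff hk).1 hv
  obtain ⟨hyL, hyj⟩ := (eq_offset_add_sum_smul_coneGen_iff hL y r _).1 hy
  refine ⟨fun i => ?_, fun i hi => ?_⟩
  · by_cases hi : i.val < d - 1
    · rw [hyj i hi]
      split_ifs <;> positivity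
    · obtain rfl : i = L := Fin.ext (by omega)
      rw [hyL]
      positivity
  · have hci : (0 : ℤ) ≤ k * c i := by positivity
    rw [hyL, hyj i hi]
    split_ifs <;> nlinarith

theorem eq_of_mem_offsets_eq_add_sum (hd : 0 < d) (hk : 0 < k) {y : Fin d → ℤ}
    {p p' : (Fin d → ℤ) × (Fin d → ℕ)}
    (hp : p.1 ∈ offsets d k ∧ y = p.1 + ∑ i, (p.2 i : ℤ) • coneGen d k i)
    (hp' : p'.1 ∈ offsets d k ∧ y = p'.1 + ∑ i, (p'.2 i : ℤ) • coneGen d k i) : p = p' := by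
  have hk' : (0 : ℤ) < k := by exact_mod_cast hk
  obtain ⟨v, c⟩ := p
  obtain ⟨v', c'⟩ := p'
  obtain ⟨hv, hy⟩ := hp
  obtain ⟨hv', hy'⟩ := hp'
  set L : Fin d := ⟨d - 1, by omega⟩
  have hL : L.val = d - 1 := rfl
  obtain ⟨r, hr0, hrk, rfl⟩ := (mem_offsets_iff hk).1 hv
  obtain ⟨r', hr0', hrk', rfl⟩ := (mem_offsets_iff hk).1 hv'
  obtain ⟨hyL, hyj⟩ := (eq_offset_add_sum_smul_coneGen_iff hL y r _).1 hy
  obtain ⟨hyL', hyj'⟩ := (eq_offset_add_sum_smul_coneGen_iff hL y r' _).1 hy'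
  obtain ⟨hcL, hr⟩ := (Int.ediv_emod_unique hk').2 ⟨hyL.symm, hr0, hrk⟩
  obtain ⟨hcL', hr'⟩ := (Int.ediv_emod_unique hk').2 ⟨hyL'.symm, hr0', hrk'⟩
  obtain rfl : r = r' := hr.symm.trans hr'
  refine Prod.ext rfl (funext fun j => ?_)
  by_cases hj : j.val < d - 1
  · have := (hyj j hj).symm.trans (hyj' j hj)
    omega
  · obtain rfl : j = L := Fin.ext (by omega)
    omega

theorem stmt1 (d k : ℕ) (hd : 2 ≤ d) (hk : 3 ≤ k) (y : Fin d → ℤ) :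
    ((∀ i, 0 ≤ y i) ∧
        ∀ i : Fin d, i.val < d - 1 → y ⟨d - 1, by omega⟩ ≤ (k : ℤ) * y i) ↔
      ∃! p : (Fin d → ℤ) × (Fin d → ℕ),
        (p.1 = 0 ∨ ∃ j : ℕ, 1 ≤ j ∧ j ≤ k - 1 ∧
            p.1 = fun i : Fin d => if i.val < d - 1 then 1 else (j : ℤ)) ∧
        y = p.1 + ∑ i : Fin d, (p.2 i : ℤ) • coneGen d k i := by
  have hk0 : 0 < k := by omega
  constructor
  · rintro ⟨hy0, hyk⟩
    obtain ⟨p, hp⟩ := exists_mem_offsets_eq_add_sum hk0 rfl hy0 hyk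
    exact ⟨p, hp, fun p' hp' => eq_of_mem_offsets_eq_add_sum (by omega) hk0 hp' hp⟩
  · rintro ⟨p, ⟨hv, hy⟩, -⟩
    exact nonneg_and_last_le_of_mem_offsets_eq_add_sum hk0 rfl hv hy
end

section
/- Let d ≥ 2 and k ≥ 3. Define Z(p, t) = ∑_{y ∈ ℤ≥0^d, k·y_i ≥ y_d ∀i<d} t^{(k+1)(y_1+⋯+y_{d−1}) − (d−2)y_d} where t = p^{−s}. Then there exist NO integers m, a, b such that substituting p → p^{−1} (equivalently X_i → X_i^{−1} for the variables X_i = p^{−(k+1)s} for i < d and X_d = p^{(d−2)s}) in the rational function Z yields (−1)^m p^{a+bs} Z. In other words, the rational function F(X_1,…,X_d) = (1 + X_1⋯X_d(1+X_d+⋯+X_d^{k−2}))/((1−X_1)⋯(1−X_{d−1})(1−X_1⋯X_{d−1}X_d^k)) does not satisfy F(X_1^{−1},…,X_d^{−1}) = ± X_1^{a_1}⋯X_d^{a_d} F(X_1,…,X_d) for any sign and integer exponents a_1,…,a_d of the specific form arising from a monomial p^{a+bs}. -/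
/-- The field `ℚ(q, t)` of rational functions in two variables `q` and `t = p^{-s}`. -/
noncomputable abbrev QTField : Type := FractionRing (MvPolynomial (Fin 2) ℚ)

noncomputable def qVar : QTField := algebraMap (MvPolynomial (Fin 2) ℚ) QTField (MvPolynomial.X 0)

noncomputable def tVar : QTField := algebraMap (MvPolynomial (Fin 2) ℚ) QTField (MvPolynomial.X 1)

/-- The local zeta function `Z_{T_d, ρ_{d,k}, p}(s)` of the split torus `T_d` with
representation `ρ_{d,k}`, as a rational function of `t = p^{-s}`: it is
`F(X₁,…,X_d)` evaluated at `X_i = t^{k+1}` (`i < d`) and `X_d = t^{-(d-2)}`. -/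
noncomputable def Zdk (d k : ℕ) (t : QTField) : QTField :=
  (1 + t ^ ((k + 1) * (d - 1)) * t ^ (-((d : ℤ) - 2)) *
      ∑ j ∈ Finset.range (k - 1), (t ^ (-((d : ℤ) - 2))) ^ j) /
    ((1 - t ^ (k + 1)) ^ (d - 1) *
      (1 - t ^ ((k + 1) * (d - 1)) * (t ^ (-((d : ℤ) - 2))) ^ k))

/-! With `e = d - 2`, `Z(t) = P(t) / Q(t)` for the polynomials `P = 1 + X^(k+1+2e) S` and
`Q = (1 - X^(k+1))^(e+1) (1 - X^(k+e+1))`, where `S = ∑_{j < k-1} X^(e j)`. Since `Q` is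
self-reciprocal up to sign and a monomial, a functional equation for `Z` would make `P`
self-reciprocal up to a monomial, `X^α P* = c X^β P` for the reciprocal `P* = X^(k+1+ek) + S`
(specialising `q ↦ 1` disposes of `p^a`). Evaluating at `1` forces `c = 1`, comparing constant
terms forces `α = β`, and then `X^(k+1+ek) - 1 = S (X^(k+1+2e) - 1)`; differentiating at `1`
gives `k + 1 + ek = (k - 1)(k + 1 + 2e)`, impossible for `k ≥ 3`. -/

open Polynomial

theorem one_sub_inv_eq_neg_inv_mul {K : Type*} [Field K] {x : K} (hx : x ≠ 0) :
    1 - x⁻¹ = -x⁻¹ * (1 - x) := by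
  field_simp
  ring

theorem one_sub_inv_pow_mul_one_sub_inv {K : Type*} [Field K] {x y : K} (hx : x ≠ 0)
    (hy : y ≠ 0) (n : ℕ) :
    (1 - x⁻¹) ^ (n + 1) * (1 - y⁻¹) =
      (-1) ^ n * (x ^ (n + 1) * y)⁻¹ * ((1 - x) ^ (n + 1) * (1 - y)) := by
  rw [one_sub_inv_eq_neg_inv_mul hx, one_sub_inv_eq_neg_inv_mul hy, mul_pow, neg_pow]
  ring

theorem zpow_mul_pow_toNat_neg {G : Type*} [GroupWithZero G] {x : G} (hx : x ≠ 0) (a : ℤ) :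
    x ^ a * x ^ (-a).toNat = x ^ a.toNat := by
  rw [← zpow_natCast, ← zpow_natCast, ← zpow_add₀ hx]
  congr 1
  omega

theorem eq_of_X_pow_mul_eq_of_coeff_zero_ne_zero {R : Type*} [CommRing R] [IsDomain R]
    {A B : R[X]} {α β : ℕ} (hA : A.coeff 0 ≠ 0) (hB : B.coeff 0 ≠ 0)
    (h : X ^ α * A = X ^ β * B) : A = B := by
  have hαβ : α = β := by
    have hα := congrArg (coeff · α) h
    have hβ := congrArg (coeff · β) h
    simp only [coeff_X_pow_mul', le_refl, if_true, Nat.sub_self] at hα hβ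
    by_contra hne
    rcases Nat.lt_or_gt_of_ne hne with hlt | hlt
    · exact hA (by simpa [Nat.not_le.mpr hlt] using hα)
    · exact hB (by simpa [Nat.not_le.mpr hlt] using hβ.symm)
  subst hαβ
  exact mul_left_cancel₀ (pow_ne_zero _ X_ne_zero) h

theorem natCast_eq_mul_eval_one_of_X_pow_add_eq {R : Type*} [CommRing R] {S : R[X]} {n m : ℕ}
    (h : X ^ n + S = 1 + X ^ m * S) : (n : R) = m * S.eval 1 := by
  simpa [derivative_X_pow] using congrArg (fun p => (derivative p).eval 1) h

theorem algebraMap_QTField_injective :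
    Function.Injective (algebraMap (MvPolynomial (Fin 2) ℚ) QTField) :=
  IsFractionRing.injective _ _

theorem aeval_tVar (p : ℚ[X]) :
    aeval tVar p = algebraMap _ QTField (aeval (MvPolynomial.X 1 : MvPolynomial (Fin 2) ℚ) p) :=
  aeval_algebraMap_apply _ _ _

theorem leftInverse_aeval_X_one :
    Function.LeftInverse (MvPolynomial.aeval (![1, X] : Fin 2 → ℚ[X]))
      (aeval (MvPolynomial.X 1 : MvPolynomial (Fin 2) ℚ)) := fun p => by
  rw [← aeval_algHom_apply]
  simp

theorem aeval_tVar_injective : Function.Injective (aeval tVar : ℚ[X] → QTField) := by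
  intro p q h
  rw [aeval_tVar, aeval_tVar] at h
  exact leftInverse_aeval_X_one.injective (algebraMap_QTField_injective h)

theorem qVar_ne_zero : qVar ≠ 0 :=
  (map_ne_zero_iff _ algebraMap_QTField_injective).mpr (MvPolynomial.X_ne_zero 0)

theorem tVar_ne_zero : tVar ≠ 0 := by
  simpa using aeval_tVar_injective.ne (X_ne_zero : (X : ℚ[X]) ≠ 0)

theorem X_pow_mul_eq_of_aeval_tVar_eq {A B : ℚ[X]} {c : ℚ} {a b : ℤ}
    (h : aeval tVar A = algebraMap ℚ QTField c * qVar ^ a * tVar ^ b * aeval tVar B) :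
    X ^ (-b).toNat * A = C c * (X ^ b.toNat * B) := by
  have hmv : (MvPolynomial.X 0) ^ (-a).toNat * (MvPolynomial.X 1) ^ (-b).toNat *
      aeval (MvPolynomial.X 1 : MvPolynomial (Fin 2) ℚ) A =
      MvPolynomial.C c * ((MvPolynomial.X 0) ^ a.toNat * (MvPolynomial.X 1) ^ b.toNat *
        aeval (MvPolynomial.X 1 : MvPolynomial (Fin 2) ℚ) B) := by
    have hc : algebraMap ℚ QTField c = algebraMap _ QTField (MvPolynomial.C c) :=
      IsScalarTower.algebraMap_apply ℚ (MvPolynomial (Fin 2) ℚ) QTField c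
    have hq := zpow_mul_pow_toNat_neg qVar_ne_zero a
    have ht := zpow_mul_pow_toNat_neg tVar_ne_zero b
    apply algebraMap_QTField_injective
    simp only [map_mul, map_pow, ← aeval_tVar, ← hc]
    change qVar ^ _ * tVar ^ _ * _ = _ * (qVar ^ _ * tVar ^ _ * _)
    rw [h]
    linear_combination
      (algebraMap ℚ QTField c * tVar ^ b * tVar ^ (-b).toNat * aeval tVar B) * hq +
        (algebraMap ℚ QTField c * qVar ^ a.toNat * aeval tVar B) * ht
  have := congrArg (MvPolynomial.aeval (![1, X] : Fin 2 → ℚ[X])) hmv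
  simpa only [map_mul, map_pow, MvPolynomial.aeval_X, MvPolynomial.aeval_C,
    leftInverse_aeval_X_one _, Matrix.cons_val_zero, Matrix.cons_val_one, one_pow, one_mul,
    algebraMap_eq] using this

section ZetaPolynomials

variable (e k : ℕ)

noncomputable def lacunaryGeomSum : ℚ[X] := ∑ j ∈ Finset.range (k - 1), X ^ (e * j)

noncomputable def zetaNum : ℚ[X] := 1 + X ^ (k + 1 + 2 * e) * lacunaryGeomSum e k

/-- `X ^ (k + 1 + e * k) * zetaNum (1 / X)`. -/
noncomputable def zetaNumRecip : ℚ[X] := X ^ (k + 1 + e * k) + lacunaryGeomSum e k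

noncomputable def zetaDen : ℚ[X] := (1 - X ^ (k + 1)) ^ (e + 1) * (1 - X ^ (k + e + 1))

variable {e k}

theorem lacunaryGeomSum_eval_one : (lacunaryGeomSum e k).eval 1 = (k - 1 : ℕ) := by
  simp [lacunaryGeomSum, eval_finsetSum]

theorem one_le_lacunaryGeomSum_eval_zero (hk : 2 ≤ k) : 1 ≤ (lacunaryGeomSum e k).eval 0 := by
  rw [lacunaryGeomSum, eval_finsetSum]
  calc (1 : ℚ) = (X ^ (e * 0) : ℚ[X]).eval 0 := by simp
    _ ≤ _ := Finset.single_le_sum (f := fun j => (X ^ (e * j) : ℚ[X]).eval 0)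
        (fun j _ => by simp [pow_nonneg]) (Finset.mem_range.mpr (by omega))

theorem zetaDen_ne_zero : zetaDen e k ≠ 0 := fun h => by
  simpa [zetaDen] using congrArg (eval 0) h

theorem zetaNumRecip_ne_C_mul_X_pow_mul_zetaNum (hk : 3 ≤ k) (c : ℚ) (α β : ℕ) :
    X ^ α * zetaNumRecip e k ≠ C c * (X ^ β * zetaNum e k) := by
  intro h
  have hc : c = 1 := by
    have h1 := congrArg (eval 1) h
    simp only [zetaNum, zetaNumRecip, eval_mul, eval_add, eval_pow, eval_X, eval_C, eval_one,
      one_pow, one_mul, lacunaryGeomSum_eval_one] at h1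
    exact (mul_eq_right₀ (by positivity)).mp h1.symm
  subst hc
  rw [C_1, one_mul] at h
  have hS0 : (lacunaryGeomSum e k).eval 0 ≠ 0 :=
    (zero_lt_one.trans_le (one_le_lacunaryGeomSum_eval_zero (by omega))).ne'
  have hpal := eq_of_X_pow_mul_eq_of_coeff_zero_ne_zero
    (by
      rw [coeff_zero_eq_eval_zero]
      simpa [zetaNumRecip, zero_pow (by omega : k + 1 + e * k ≠ 0)] using hS0)
    (by rw [coeff_zero_eq_eval_zero]; simp [zetaNum]) h
  have hderiv := natCast_eq_mul_eval_one_of_X_pow_add_eq hpal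
  rw [lacunaryGeomSum_eval_one] at hderiv
  have hnat : k + 1 + e * k = (k + 1 + 2 * e) * (k - 1) := by exact_mod_cast hderiv
  obtain ⟨w, rfl⟩ : ∃ w, k = w + 3 := ⟨k - 3, by omega⟩
  rw [show w + 3 - 1 = w + 2 by omega] at hnat
  nlinarith

theorem Zdk_eq_aeval {t : QTField} (ht : t ≠ 0) :
    Zdk (e + 2) k t = aeval t (zetaNum e k) / aeval t (zetaDen e k) := by
  have hd : ((e + 2 : ℕ) : ℤ) - 2 = e := by push_cast; ring
  have hd' : e + 2 - 1 = e + 1 := rfl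
  have hterm : ∀ j ∈ Finset.range (k - 1),
      t ^ ((k + 1) * (e + 1)) * (t ^ e)⁻¹ * ((t ^ e)⁻¹) ^ j =
        t ^ (k + 1 + 2 * e) * t ^ (e * (k - 1 - 1 - j)) := by
    intro j hj
    obtain ⟨r, rfl⟩ : ∃ r, k = j + 2 + r := ⟨k - 2 - j, by have := Finset.mem_range.mp hj; omega⟩
    rw [show j + 2 + r - 1 - 1 - j = r by omega,
      show (j + 2 + r + 1) * (e + 1) = (j + 2 + r + 1 + 2 * e) + e * r + e * j + e by ring,
      pow_add, pow_add, pow_add, pow_mul, pow_mul]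
    field_simp
    rw [← mul_pow, mul_one_div_cancel (pow_ne_zero _ ht), one_pow]
  have hden : t ^ ((k + 1) * (e + 1)) * ((t ^ e)⁻¹) ^ k = t ^ (k + e + 1) := by
    rw [show (k + 1) * (e + 1) = k + e + 1 + e * k by ring, pow_add, pow_mul, inv_pow,
      mul_inv_cancel_right₀ (pow_ne_zero _ (pow_ne_zero _ ht))]
  simp only [Zdk, hd', hd, zpow_neg, zpow_natCast, hden, zetaNum, zetaDen,
    lacunaryGeomSum, map_add, map_mul, map_sub, map_pow, map_one, map_sum, aeval_X]
  rw [Finset.mul_sum, Finset.sum_congr rfl hterm, ← Finset.mul_sum,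
    Finset.sum_range_reflect (fun j => t ^ (e * j)) (k - 1)]

theorem Zdk_inv_eq_aeval {t : QTField} (ht : t ≠ 0) :
    Zdk (e + 2) k t⁻¹ =
      (-1) ^ e * t ^ (k + 2 * e + 1) * aeval t (zetaNumRecip e k) / aeval t (zetaDen e k) := by
  have hd : ((e + 2 : ℕ) : ℤ) - 2 = e := by push_cast; ring
  have hd' : e + 2 - 1 = e + 1 := rfl
  have hsplit : (k + 1) * (e + 1) = (k + 1 + e * k) + e := by ring
  have hnum : 1 + (t ^ ((k + 1) * (e + 1)))⁻¹ * t ^ e * ∑ j ∈ Finset.range (k - 1), (t ^ e) ^ j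
      = (t ^ (k + 1 + e * k))⁻¹ * aeval t (zetaNumRecip e k) := by
    simp only [zetaNumRecip, lacunaryGeomSum, map_add, map_pow, map_sum, aeval_X]
    simp only [pow_mul, hsplit, pow_add]
    field_simp
  have hden : (1 - (t ^ (k + 1))⁻¹) ^ (e + 1) * (1 - (t ^ ((k + 1) * (e + 1)))⁻¹ * (t ^ e) ^ k)
      = (-1) ^ e * (t ^ (k + 1 + e * k) * t ^ (k + 2 * e + 1))⁻¹ * aeval t (zetaDen e k) := by
    have hexp : t ^ (k + 1 + e * k) * t ^ (k + 2 * e + 1) =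
        (t ^ (k + 1)) ^ (e + 1) * t ^ (k + e + 1) := by
      rw [← pow_mul, ← pow_add, ← pow_add]; ring_nf
    have hlast : (t ^ ((k + 1) * (e + 1)))⁻¹ * (t ^ e) ^ k = (t ^ (k + e + 1))⁻¹ := by
      rw [show (k + 1) * (e + 1) = (k + e + 1) + e * k by ring, pow_add, pow_mul, mul_inv,
        inv_mul_cancel_right₀ (pow_ne_zero _ (pow_ne_zero _ ht))]
    rw [hlast, one_sub_inv_pow_mul_one_sub_inv (pow_ne_zero _ ht) (pow_ne_zero _ ht), hexp]
    simp only [zetaDen, map_mul, map_sub, map_pow, map_one, aeval_X]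
  simp only [Zdk, hd', hd, zpow_neg, zpow_natCast, inv_pow, inv_inv, hnum, hden]
  rw [mul_div_mul_comm, mul_div_assoc]
  congr 1
  have hs : ((-1 : QTField) ^ e)⁻¹ = (-1) ^ e := by rw [← inv_pow, inv_neg_one]
  rw [div_eq_mul_inv, mul_inv, hs, inv_inv]
  field_simp

end ZetaPolynomials

/-- There are no integers `m, a, b` such that `Z|_{p→p⁻¹} = (−1)^m p^{a+bs} Z`:
substituting `p → p⁻¹` (i.e. `t → t⁻¹`) does not transform `Z` by a sign times
a monomial `p^a t^{-b}`. -/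
theorem stmt3 (d k : ℕ) (hd : 2 ≤ d) (hk : 3 ≤ k) :
    ¬ ∃ (m a b : ℤ),
        Zdk d k tVar⁻¹ = (-1 : QTField) ^ m * qVar ^ a * tVar ^ (-b) * Zdk d k tVar := by
  rintro ⟨m, a, b, H⟩
  obtain ⟨e, rfl⟩ : ∃ e, d = e + 2 := ⟨d - 2, by omega⟩
  have hD : aeval tVar (zetaDen e k) ≠ 0 :=
    (map_ne_zero_iff _ aeval_tVar_injective).mpr zetaDen_ne_zero
  rw [Zdk_inv_eq_aeval tVar_ne_zero, Zdk_eq_aeval tVar_ne_zero, ← mul_div_assoc,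
    div_left_inj' hD] at H
  set N := k + 2 * e + 1
  have hsign : ((-1 : QTField) ^ e) * (-1) ^ e = 1 := by rw [← mul_pow]; simp
  have hrecip : aeval tVar (zetaNumRecip e k) = algebraMap ℚ QTField ((-1) ^ e * (-1) ^ m) *
      qVar ^ a * tVar ^ (-b - N) * aeval tVar (zetaNum e k) := by
    rw [map_mul, map_pow, map_zpow₀, map_neg, map_one, zpow_sub₀ tVar_ne_zero, zpow_natCast]
    calc aeval tVar (zetaNumRecip e k)
        = (-1) ^ e * (-1) ^ e * ((tVar ^ N)⁻¹ * tVar ^ N) * aeval tVar (zetaNumRecip e k) := by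
          rw [hsign, inv_mul_cancel₀ (pow_ne_zero _ tVar_ne_zero)]; ring
      _ = (-1) ^ e * (tVar ^ N)⁻¹ * ((-1) ^ e * tVar ^ N * aeval tVar (zetaNumRecip e k)) := by
          ring
      _ = _ := by rw [H]; ring
  exact zetaNumRecip_ne_C_mul_X_pow_mul_zetaNum hk _ _ _ (X_pow_mul_eq_of_aeval_tVar_eq hrecip)
end

section
/- Let H be a hyperplane in ℝ^m (zero set of a nonzero linear form) and let F ⊆ ℝ^m be a convex set which is open in its affine/linear span, with F ∩ H ≠ ∅ and F ⊄ H. Then F ∩ H^> ≠ ∅, F ∩ H^< ≠ ∅, and dim(F ∩ H^>) = dim(F ∩ H^<) = dim(F ∩ H) + 1 = dim F, where dim denotes the dimension of the linear span and H^>, H^< are the open half-spaces defined by the linear form. -/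
/-!
Because `F` is open in its span, from a point `x ∈ F ∩ H` one can move a little in any direction
of `span F` and stay in `F`. Moving along `±(y - x)` for some `y ∈ F \ H` reaches both open
half-spaces, and moving along directions of `span F ∩ H` shows `span (F ∩ H) = span F ∩ H`, a
hyperplane of `span F`. Finally, given `p ∈ F ∩ H^>`, every `z ∈ F` is a linear combination of `p`
and a point of the segment `[p, z]` close enough to `p` to lie in `H^>`, so `F ∩ H^>` spans
`span F`.
-/

open Topology Module

section OpenInSpan

variable {E : Type*} [AddCommGroup E] [Module ℝ E] [TopologicalSpace E] [ContinuousAdd E]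
  [ContinuousSMul ℝ E] {F : Set E}

lemma exists_pos_add_smul_mem_of_isOpen_span
    (hF : IsOpen {x : Submodule.span ℝ F | (x : E) ∈ F}) {x v : E} (hx : x ∈ F)
    (hv : v ∈ Submodule.span ℝ F) : ∃ t : ℝ, 0 < t ∧ x + t • v ∈ F := by
  set S := Submodule.span ℝ F
  let line : ℝ → S := fun t => ⟨x + t • v, S.add_mem (Submodule.subset_span hx) (S.smul_mem t hv)⟩
  have hline : Continuous line := by fun_prop
  have hnear : ∀ᶠ t in 𝓝 (0 : ℝ), x + t • v ∈ F :=
    hline.continuousAt.preimage_mem_nhds (hF.mem_nhds (by simpa [line] using hx))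
  obtain ⟨t, hmem, ht⟩ :=
    ((hnear.filter_mono nhdsWithin_le_nhds).and (self_mem_nhdsWithin (s := Set.Ioi 0))).exists
  exact ⟨t, ht, hmem⟩

lemma exists_mem_pos_of_isOpen_span (hF : IsOpen {x : Submodule.span ℝ F | (x : E) ∈ F})
    (f : E →ₗ[ℝ] ℝ) {x y : E} (hx : x ∈ F) (hfx : f x = 0) (hy : y ∈ F) (hfy : f y ≠ 0) :
    ∃ p ∈ F, 0 < f p := by
  have hv : f y • (y - x) ∈ Submodule.span ℝ F :=
    Submodule.smul_mem _ _ (Submodule.sub_mem _ (Submodule.subset_span hy)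
      (Submodule.subset_span hx))
  obtain ⟨t, ht, hmem⟩ := exists_pos_add_smul_mem_of_isOpen_span hF hx hv
  refine ⟨_, hmem, ?_⟩
  have : f (x + t • f y • (y - x)) = t * f y ^ 2 := by
    simp only [map_add, map_smul, map_sub, hfx, smul_eq_mul]; ring
  rw [this]
  positivity

lemma span_inter_setOf_eq_zero_of_isOpen_span
    (hF : IsOpen {x : Submodule.span ℝ F | (x : E) ∈ F}) (f : E →ₗ[ℝ] ℝ) {x : E} (hx : x ∈ F)
    (hfx : f x = 0) :
    Submodule.span ℝ (F ∩ {v | f v = 0}) = Submodule.span ℝ F ⊓ LinearMap.ker f := by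
  refine le_antisymm (Submodule.span_le.2 fun v hv => ⟨Submodule.subset_span hv.1, hv.2⟩) ?_
  rintro v ⟨hvF, hfv⟩
  obtain ⟨t, ht, hmem⟩ := exists_pos_add_smul_mem_of_isOpen_span hF hx hvF
  have hx' : x ∈ Submodule.span ℝ (F ∩ {v | f v = 0}) := Submodule.subset_span ⟨hx, hfx⟩
  have hxtv : x + t • v ∈ Submodule.span ℝ (F ∩ {v | f v = 0}) := by
    refine Submodule.subset_span ⟨hmem, ?_⟩
    simp [hfx, LinearMap.mem_ker.1 hfv]
  exact (Submodule.smul_mem_iff _ ht.ne').1 ((Submodule.add_mem_iff_right _ hx').1 hxtv)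

end OpenInSpan

lemma span_inter_setOf_pos_eq {E : Type*} [AddCommGroup E] [Module ℝ E] {F : Set E}
    (hF : Convex ℝ F) (f : E →ₗ[ℝ] ℝ) {p : E} (hp : p ∈ F) (hfp : 0 < f p) :
    Submodule.span ℝ (F ∩ {v | 0 < f v}) = Submodule.span ℝ F := by
  refine le_antisymm (Submodule.span_mono Set.inter_subset_left)
    (Submodule.span_le.2 fun z hz => ?_)
  by_cases hfz : 0 < f z
  · exact Submodule.subset_span ⟨hz, hfz⟩
  push Not at hfz
  -- `t` is chosen so that `f` takes the value `f p / 2` at `(1 - t) • p + t • z`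
  have hd : 0 < f p - f z := by linarith
  set t : ℝ := f p / (2 * (f p - f z)) with ht_def
  have ht : 0 < t := by positivity
  have ht1 : t ≤ 1 := by rw [div_le_one (by positivity)]; linarith
  have hfu : 0 < f ((1 - t) • p + t • z) := by
    have : t * (f p - f z) = f p / 2 := by rw [ht_def]; field_simp
    simp only [map_add, map_smul, smul_eq_mul]
    nlinarith
  have hu : (1 - t) • p + t • z ∈ Submodule.span ℝ (F ∩ {v | 0 < f v}) :=
    Submodule.subset_span ⟨hF hp hz (by linarith) ht.le (by ring), hfu⟩
  have hp' : (1 - t) • p ∈ Submodule.span ℝ (F ∩ {v | 0 < f v}) :=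
    Submodule.smul_mem _ _ (Submodule.subset_span ⟨hp, hfp⟩)
  exact (Submodule.smul_mem_iff _ ht.ne').1 ((Submodule.add_mem_iff_right _ hp').1 hu)

lemma finrank_inf_ker_add_one {K V : Type*} [DivisionRing K] [AddCommGroup V] [Module K V]
    {S : Submodule K V} [FiniteDimensional K S] {f : V →ₗ[K] K} {p : V} (hp : p ∈ S)
    (hfp : f p ≠ 0) : finrank K ↥(S ⊓ LinearMap.ker f) + 1 = finrank K S := by
  have hf : f.domRestrict S ≠ 0 := fun h => hfp (LinearMap.congr_fun h ⟨p, hp⟩)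
  rw [← Module.Dual.finrank_ker_add_one_of_ne_zero hf, LinearMap.ker_domRestrict,
    ← Submodule.map_comap_subtype, Submodule.finrank_map_subtype_eq]

theorem nonempty_inter_and_finrank_span_inter {E : Type*} [AddCommGroup E] [Module ℝ E]
    [TopologicalSpace E] [ContinuousAdd E] [ContinuousSMul ℝ E] [FiniteDimensional ℝ E]
    {F : Set E} (hconv : Convex ℝ F) (hopen : IsOpen {x : Submodule.span ℝ F | (x : E) ∈ F})
    (f : E →ₗ[ℝ] ℝ) (hmeet : (F ∩ {v | f v = 0}).Nonempty) (hnsub : ¬ F ⊆ {v | f v = 0}) :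
    (F ∩ {v | 0 < f v}).Nonempty ∧ (F ∩ {v | f v < 0}).Nonempty ∧
    finrank ℝ (Submodule.span ℝ (F ∩ {v | 0 < f v})) = finrank ℝ (Submodule.span ℝ F) ∧
    finrank ℝ (Submodule.span ℝ (F ∩ {v | f v < 0})) = finrank ℝ (Submodule.span ℝ F) ∧
    finrank ℝ (Submodule.span ℝ (F ∩ {v | f v = 0})) + 1 = finrank ℝ (Submodule.span ℝ F) := by
  obtain ⟨x, hx, hfx⟩ := hmeet
  obtain ⟨y, hy, hfy⟩ := Set.not_subset.1 hnsub
  obtain ⟨p, hp, hfp⟩ := exists_mem_pos_of_isOpen_span hopen f hx hfx hy hfy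
  obtain ⟨q, hq, hfq⟩ := exists_mem_pos_of_isOpen_span hopen (-f) hx (by simpa using hfx) hy
    (by simpa using hfy)
  have hneg : {v | f v < 0} = {v | 0 < (-f) v} := by simp
  refine ⟨⟨p, hp, hfp⟩, ⟨q, hq, by simpa using hfq⟩, ?_, ?_, ?_⟩
  · rw [span_inter_setOf_pos_eq hconv f hp hfp]
  · rw [hneg, span_inter_setOf_pos_eq hconv (-f) hq hfq]
  · rw [span_inter_setOf_eq_zero_of_isOpen_span hopen f hx hfx]
    exact finrank_inf_ker_add_one (Submodule.subset_span hp) hfp.ne'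

theorem stmt5_general (m : ℕ) (w : Fin m → ℝ) (F : Set (Fin m → ℝ))
    (hconv : Convex ℝ F)
    (hopen : IsOpen {x : Submodule.span ℝ F | (x : Fin m → ℝ) ∈ F})
    (hmeet : (F ∩ {v | ∑ i, v i * w i = 0}).Nonempty)
    (hnsub : ¬ F ⊆ {v | ∑ i, v i * w i = 0}) :
    (F ∩ {v | 0 < ∑ i, v i * w i}).Nonempty ∧
    (F ∩ {v | ∑ i, v i * w i < 0}).Nonempty ∧
    Module.finrank ℝ (Submodule.span ℝ (F ∩ {v | 0 < ∑ i, v i * w i})) =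
      Module.finrank ℝ (Submodule.span ℝ F) ∧
    Module.finrank ℝ (Submodule.span ℝ (F ∩ {v | ∑ i, v i * w i < 0})) =
      Module.finrank ℝ (Submodule.span ℝ F) ∧
    Module.finrank ℝ (Submodule.span ℝ (F ∩ {v | ∑ i, v i * w i = 0})) + 1 =
      Module.finrank ℝ (Submodule.span ℝ F) :=
  nonempty_inter_and_finrank_span_inter hconv hopen (Fintype.linearCombination ℝ w) hmeet hnsub

/-- Let `H = {v : v·w = 0}` be a hyperplane and `F` a convex set, open in its
linear span, meeting `H` but not contained in it. Then `F` meets both open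
half-spaces and `dim(F∩H^>) = dim(F∩H^<) = dim(F∩H) + 1 = dim F`. -/
theorem stmt5 (m : ℕ) (w : Fin m → ℝ) (hw : w ≠ 0) (F : Set (Fin m → ℝ))
    (hconv : Convex ℝ F)
    (hopen : IsOpen {x : Submodule.span ℝ F | (x : Fin m → ℝ) ∈ F})
    (hmeet : (F ∩ {v | ∑ i, v i * w i = 0}).Nonempty)
    (hnsub : ¬ F ⊆ {v | ∑ i, v i * w i = 0}) :
    (F ∩ {v | 0 < ∑ i, v i * w i}).Nonempty ∧
    (F ∩ {v | ∑ i, v i * w i < 0}).Nonempty ∧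
    Module.finrank ℝ (Submodule.span ℝ (F ∩ {v | 0 < ∑ i, v i * w i})) =
      Module.finrank ℝ (Submodule.span ℝ F) ∧
    Module.finrank ℝ (Submodule.span ℝ (F ∩ {v | ∑ i, v i * w i < 0})) =
      Module.finrank ℝ (Submodule.span ℝ F) ∧
    Module.finrank ℝ (Submodule.span ℝ (F ∩ {v | ∑ i, v i * w i = 0})) + 1 =
      Module.finrank ℝ (Submodule.span ℝ F) :=
  stmt5_general m w F hconv hopen hmeet hnsub
end

section
/- Let C ⊆ ℝ^m be a simplicial cone of dimension m defined by m bounding hyperplanes B_1,…,B_m (so C = ∩ B_i^≥ and every point of C is a unique nonnegative combination of m fixed linearly independent vectors). For I ⊆ [m] let C_I = ∩_{i∈I} B_i^> ∩ ∩_{j∉I} B_j^≥. In the cell complex with no internal hyperplanes, the cells are the sets C_J for J ⊆ [m], the face relation is F_1 ≤ F_2 iff closure(F_1) ⊆ closure(F_2), and for any cell F_0 and any I ⊆ [m]: ∑_{F a cell with F ⊆ C_I and F ≥ F_0} (−1)^{dim F} equals (−1)^m if F_0 ⊆ C_{[m]∖I} and 0 otherwise. -/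
open scoped Classical

/-- The cell of the complex (no internal hyperplanes) with strict positivity on the
bounding forms `B i`, `i ∈ J`, and lying on the bounding hyperplanes `B i`, `i ∉ J`. -/
def cellOf (m : ℕ) (B : Fin m → (Fin m → ℝ)) (J : Finset (Fin m)) : Set (Fin m → ℝ) :=
  {x | (∀ i ∈ J, 0 < ∑ j, B i j * x j) ∧ ∀ i ∉ J, ∑ j, B i j * x j = 0}

/-- `C_I = ∩_{i∈I} B_i^> ∩ ∩_{j∉I} B_j^≥`. -/
def CIOf (m : ℕ) (B : Fin m → (Fin m → ℝ)) (I : Finset (Fin m)) : Set (Fin m → ℝ) :=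
  {x | (∀ i ∈ I, 0 < ∑ j, B i j * x j) ∧ ∀ i, 0 ≤ ∑ j, B i j * x j}

/-!
A simplicial cone is pointed, so the forms `B i` have no common zero besides `0` and
`e x = (∑ j, B i j * x j)ᵢ` is a linear automorphism of `ℝ^m`. It maps `cellOf m B J` onto the
face of the nonnegative orthant on which exactly the coordinates in `J` are positive. Hence every
cell is nonempty, `cellOf m B J ⊆ CIOf m B K ↔ K ⊆ J`, the face order is inclusion of index sets
and `dim (cellOf m B J) = |J|`, so the sum is `∑_{J ⊇ I ∪ J₀} (-1)^|J|`, which vanishes unless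
`I ∪ J₀` is all of `[m]`.
-/

open Finset

lemma sum_powerset_univ_ite_subset_neg_one_pow {ι : Type*} [Fintype ι] (K : Finset ι) :
    (∑ J ∈ (univ : Finset ι).powerset, if K ⊆ J then (-1 : ℤ) ^ #J else 0) =
      if K = univ then (-1 : ℤ) ^ Fintype.card ι else 0 := by
  -- expand `∏ i, (-1 + [i ∉ K])` in two ways
  have hexpand := prod_add (fun _ => (-1 : ℤ)) (fun i => if i ∉ K then 1 else 0) univ
  have hfactor : ∏ i, ((-1 : ℤ) + if i ∉ K then 1 else 0) = ∏ i, if i ∈ K then -1 else 0 :=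
    prod_congr rfl fun i _ => by split_ifs <;> simp_all
  have hterm : ∀ J ∈ (univ : Finset ι).powerset,
      (∏ _i ∈ J, (-1 : ℤ)) * ∏ i ∈ univ \ J, (if i ∉ K then 1 else 0) =
        if K ⊆ J then (-1 : ℤ) ^ #J else 0 := fun J _ => by
    rw [prod_const, prod_boole]
    simp [subset_iff, not_imp_not]
  rw [← sum_congr rfl hterm, ← hexpand, hfactor, Fintype.prod_ite_zero, prod_const, card_univ]
  simp [eq_univ_iff_forall]

section OrthantFace

variable {ι : Type*}

def orthantFace (J : Finset ι) : Set (ι → ℝ) :=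
  Set.univ.pi fun i => if i ∈ J then Set.Ioi 0 else {0}

lemma mem_orthantFace {J : Finset ι} {y : ι → ℝ} :
    y ∈ orthantFace J ↔ (∀ i ∈ J, 0 < y i) ∧ ∀ i ∉ J, y i = 0 := by
  refine ⟨fun h => ⟨fun i hi => ?_, fun i hi => ?_⟩, fun ⟨hpos, hzero⟩ i _ => ?_⟩
  · simpa [hi] using h i (Set.mem_univ i)
  · simpa [hi] using h i (Set.mem_univ i)
  · by_cases hi : i ∈ J
    · simpa [hi] using hpos i hi
    · simpa [hi] using hzero i hi

lemma indicator_mem_orthantFace (J : Finset ι) :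
    (fun i => if i ∈ J then (1 : ℝ) else 0) ∈ orthantFace J :=
  mem_orthantFace.2 ⟨fun i hi => by simp [hi], fun i hi => by simp [hi]⟩

lemma indicator_add_single_mem_orthantFace {J : Finset ι} {i : ι} (hi : i ∈ J) :
    (fun k => if k ∈ J then (1 : ℝ) else 0) + Pi.single i 1 ∈ orthantFace J := by
  refine mem_orthantFace.2 ⟨fun k hk => ?_, fun k hk => ?_⟩
  · have : (0 : ℝ) ≤ (Pi.single i 1 : ι → ℝ) k := by by_cases hki : k = i <;> simp [hki]
    simp only [Pi.add_apply, hk, if_true]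
    linarith
  · have hki : k ≠ i := by rintro rfl; exact hk hi
    simp [hk, hki]

lemma orthantFace_subset_iff {J K : Finset ι} :
    orthantFace J ⊆ {y | (∀ i ∈ K, 0 < y i) ∧ ∀ i, 0 ≤ y i} ↔ K ⊆ J := by
  refine ⟨fun h i hiK => ?_, fun hKJ y hy => ?_⟩
  · by_contra hiJ
    simpa [hiJ] using (h (indicator_mem_orthantFace J)).1 i hiK
  · obtain ⟨hpos, hzero⟩ := mem_orthantFace.1 hy
    exact ⟨fun i hi => hpos i (hKJ hi),
      fun i => if hi : i ∈ J then (hpos i hi).le else (hzero i hi).ge⟩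

lemma closure_orthantFace (J : Finset ι) :
    closure (orthantFace J) = Set.univ.pi fun i => if i ∈ J then Set.Ici 0 else {0} := by
  simp [orthantFace, closure_pi_set, apply_ite]

lemma closure_orthantFace_subset_iff {J₀ J : Finset ι} :
    closure (orthantFace J₀) ⊆ closure (orthantFace J) ↔ J₀ ⊆ J := by
  refine ⟨fun h i hi => ?_, fun h => ?_⟩
  · by_contra hiJ
    have hmem := h (subset_closure (indicator_mem_orthantFace J₀))
    rw [closure_orthantFace] at hmem
    simpa [hi, hiJ] using hmem i (Set.mem_univ i)
  · rw [closure_orthantFace, closure_orthantFace]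
    refine Set.pi_mono fun i _ => ?_
    by_cases hi : i ∈ J₀
    · simp [hi, h hi]
    · split_ifs <;> simp

variable [Fintype ι]

lemma span_orthantFace (J : Finset ι) :
    Submodule.span ℝ (orthantFace J) =
      Submodule.span ℝ (Set.range fun i : J => Pi.single (i : ι) (1 : ℝ)) := by
  apply le_antisymm
  · rw [Submodule.span_le]
    intro y hy
    rw [← univ_sum_single y]
    refine Submodule.sum_mem _ fun i _ => ?_
    by_cases hi : i ∈ J
    · rw [← mul_one (y i), ← smul_eq_mul, Pi.single_smul]
      exact Submodule.smul_mem _ _ (Submodule.subset_span ⟨⟨i, hi⟩, rfl⟩)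
    · simp [(mem_orthantFace.1 hy).2 i hi]
  · rw [Submodule.span_le]
    rintro _ ⟨⟨i, hi⟩, rfl⟩
    simpa using sub_mem (Submodule.subset_span (R := ℝ) (indicator_add_single_mem_orthantFace hi))
      (Submodule.subset_span (indicator_mem_orthantFace J))

lemma finrank_span_orthantFace (J : Finset ι) :
    Module.finrank ℝ (Submodule.span ℝ (orthantFace J)) = #J := by
  rw [span_orthantFace, finrank_span_eq_card, Fintype.card_coe]
  exact (Pi.basisFun ℝ ι).linearIndependent.comp _ Subtype.val_injective

end OrthantFace

lemma eq_zero_of_forall_sum_mul_eq_zero {n κ ι : Type*} [Fintype n] [Fintype ι]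
    {B : κ → n → ℝ} {v : ι → n → ℝ} (hv : LinearIndependent ℝ v)
    (hC : {x : n → ℝ | ∀ i, 0 ≤ ∑ j, B i j * x j} =
      {x | ∃ c : ι → ℝ, (∀ i, 0 ≤ c i) ∧ x = ∑ i, c i • v i})
    {x : n → ℝ} (hx : ∀ i, ∑ j, B i j * x j = 0) : x = 0 := by
  have hcone : ∀ y : n → ℝ, (∀ i, ∑ j, B i j * y j = 0) →
      ∃ c : ι → ℝ, (∀ i, 0 ≤ c i) ∧ y = ∑ i, c i • v i := fun y hy =>
    hC.subset fun i => (hy i).ge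
  obtain ⟨c, hc, rfl⟩ := hcone x hx
  obtain ⟨d, hd, hneg⟩ := hcone (-∑ i, c i • v i) fun i => by
    simp only [Pi.neg_apply, mul_neg, sum_neg_distrib, hx i, neg_zero]
  have hsum : ∑ i, (c i + d i) • v i = 0 := by
    simp only [add_smul, sum_add_distrib, ← hneg, add_neg_cancel]
  have hcd := Fintype.linearIndependent_iff.1 hv _ hsum
  have hc0 : c = 0 := funext fun i => le_antisymm (show c i ≤ 0 by linarith [hd i, hcd i]) (hc i)
  simp [hc0]

lemma exists_continuousLinearEquiv_of_forall_sum_mul_eq_zero {n : Type*} [Fintype n]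
    {B : n → n → ℝ} (hB : ∀ x : n → ℝ, (∀ i, ∑ j, B i j * x j = 0) → x = 0) :
    ∃ e : (n → ℝ) ≃L[ℝ] (n → ℝ), ∀ x i, e x i = ∑ j, B i j * x j := by
  let L := Matrix.mulVecLin (B : Matrix n n ℝ)
  have hL : Function.Injective L :=
    (injective_iff_map_eq_zero L).2 fun x hx => hB x fun i => congrFun hx i
  exact ⟨(LinearEquiv.ofInjectiveEndo L hL).toContinuousLinearEquiv, fun x i => rfl⟩

section Cells

variable {m : ℕ} {B : Fin m → Fin m → ℝ} (e : (Fin m → ℝ) ≃L[ℝ] (Fin m → ℝ))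
  (he : ∀ x i, e x i = ∑ j, B i j * x j)
include he

lemma cellOf_eq_preimage (J : Finset (Fin m)) : cellOf m B J = e ⁻¹' orthantFace J := by
  ext x
  simp [cellOf, mem_orthantFace, he]

lemma CIOf_eq_preimage (K : Finset (Fin m)) :
    CIOf m B K = e ⁻¹' {y | (∀ i ∈ K, 0 < y i) ∧ ∀ i, 0 ≤ y i} := by
  ext x
  simp [CIOf, he]

lemma cellOf_nonempty (J : Finset (Fin m)) : (cellOf m B J).Nonempty := by
  rw [cellOf_eq_preimage e he]
  exact Set.Nonempty.preimage ⟨_, indicator_mem_orthantFace J⟩ e.surjective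

lemma cellOf_subset_CIOf_iff {J K : Finset (Fin m)} : cellOf m B J ⊆ CIOf m B K ↔ K ⊆ J := by
  rw [cellOf_eq_preimage e he, CIOf_eq_preimage e he, e.surjective.preimage_subset_preimage_iff,
    orthantFace_subset_iff]

lemma closure_cellOf_subset_iff {J₀ J : Finset (Fin m)} :
    closure (cellOf m B J₀) ⊆ closure (cellOf m B J) ↔ J₀ ⊆ J := by
  rw [cellOf_eq_preimage e he, cellOf_eq_preimage e he, ← e.preimage_closure,
    ← e.preimage_closure, e.surjective.preimage_subset_preimage_iff,
    closure_orthantFace_subset_iff]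

lemma finrank_span_cellOf (J : Finset (Fin m)) :
    Module.finrank ℝ (Submodule.span ℝ (cellOf m B J)) = #J := by
  rw [cellOf_eq_preimage e he, ← e.image_symm_eq_preimage, ← e.symm.coe_toLinearEquiv,
    ← LinearEquiv.coe_coe, Submodule.span_image, LinearEquiv.finrank_map_eq,
    finrank_span_orthantFace]

end Cells

theorem stmt8_general (m : ℕ) (B v : Fin m → (Fin m → ℝ))
    (hv : LinearIndependent ℝ v)
    (hC : {x : Fin m → ℝ | ∀ i, 0 ≤ ∑ j, B i j * x j} =
        {x | ∃ c : Fin m → ℝ, (∀ i, 0 ≤ c i) ∧ x = ∑ i, c i • v i})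
    (I J₀ : Finset (Fin m)) :
    (∑ J ∈ (Finset.univ : Finset (Fin m)).powerset,
        if (cellOf m B J).Nonempty ∧ cellOf m B J ⊆ CIOf m B I ∧
            closure (cellOf m B J₀) ⊆ closure (cellOf m B J) then
          (-1 : ℤ) ^ Module.finrank ℝ (Submodule.span ℝ (cellOf m B J))
        else 0) =
      if cellOf m B J₀ ⊆ CIOf m B (Finset.univ \ I) then (-1 : ℤ) ^ m else 0 := by
  obtain ⟨e, he⟩ := exists_continuousLinearEquiv_of_forall_sum_mul_eq_zero
    fun x hx => eq_zero_of_forall_sum_mul_eq_zero hv hC hx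
  have hsummand : ∀ J ∈ (univ : Finset (Fin m)).powerset,
      (if (cellOf m B J).Nonempty ∧ cellOf m B J ⊆ CIOf m B I ∧
          closure (cellOf m B J₀) ⊆ closure (cellOf m B J) then
        (-1 : ℤ) ^ Module.finrank ℝ (Submodule.span ℝ (cellOf m B J))
      else 0) = if I ∪ J₀ ⊆ J then (-1 : ℤ) ^ #J else 0 := fun J _ => by
    simp only [cellOf_nonempty e he, cellOf_subset_CIOf_iff e he,
      closure_cellOf_subset_iff e he, finrank_span_cellOf e he, true_and, union_subset_iff]
  have hrhs : cellOf m B J₀ ⊆ CIOf m B (univ \ I) ↔ I ∪ J₀ = univ := by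
    rw [cellOf_subset_CIOf_iff e he, ← univ_subset_iff]
    exact sdiff_le_iff
  rw [sum_congr rfl hsummand, if_congr hrhs rfl rfl]
  convert sum_powerset_univ_ite_subset_neg_one_pow (I ∪ J₀)
  exact (Fintype.card_fin m).symm

/-- For a simplicial cone `C` of dimension `m` cut out by `m` bounding hyperplanes
(so every point of `C` is a unique nonnegative combination of `m` independent
generators `v`), and any cell `F₀` and `I ⊆ [m]`:
`∑_{F ⊆ C_I, F ≥ F₀} (−1)^{dim F}` is `(−1)^m` if `F₀ ⊆ C_{[m]∖I}` and `0` otherwise. -/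
theorem stmt8 (m : ℕ) (B v : Fin m → (Fin m → ℝ))
    (hv : LinearIndependent ℝ v)
    (hC : {x : Fin m → ℝ | ∀ i, 0 ≤ ∑ j, B i j * x j} =
        {x | ∃ c : Fin m → ℝ, (∀ i, 0 ≤ c i) ∧ x = ∑ i, c i • v i})
    (huniq : ∀ x ∈ {x : Fin m → ℝ | ∀ i, 0 ≤ ∑ j, B i j * x j},
        ∃! c : Fin m → ℝ, (∀ i, 0 ≤ c i) ∧ x = ∑ i, c i • v i)
    (I J₀ : Finset (Fin m)) (hJ₀ : (cellOf m B J₀).Nonempty) :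
    (∑ J ∈ (Finset.univ : Finset (Fin m)).powerset,
        if (cellOf m B J).Nonempty ∧ cellOf m B J ⊆ CIOf m B I ∧
            closure (cellOf m B J₀) ⊆ closure (cellOf m B J) then
          (-1 : ℤ) ^ Module.finrank ℝ (Submodule.span ℝ (cellOf m B J))
        else 0) =
      if cellOf m B J₀ ⊆ CIOf m B (Finset.univ \ I) then (-1 : ℤ) ^ m else 0 :=
  stmt8_general m B v hv hC I J₀
end

section
/- Let u_1,…,u_k ∈ ℤ^m be ℝ-linearly independent, let A, C ∈ ℤ^m, B ∈ ℤ^m with B·u_i > 0 for all i, and let F_0 = {∑ λ_i u_i : λ_i > 0}. Define E(q, q^{−s}) = ∑_{e ∈ F_0 ∩ ℤ^m} q^{(A+C)·e − (B·e)s}. Then E is a rational function in q and q^{−s}, equal to (∑_{e ∈ D_1} q^{(A+C)·e − (B·e)s}) · ∏_{i=1}^k (1 − q^{(A+C)·u_i − (B·u_i)s})^{−1}, where D_1 = ℤ^m ∩ ∑(0,1]u_i. Moreover, substituting q → q^{−1} yields (−1)^k · ∑_{e ∈ closure(F_0) ∩ ℤ^m} q^{(A+C)·e − (B·e)s}. 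-/
/-!
Every lattice point of the cone with coefficients in `(0, ∞)` (resp. `[0, ∞)`) is uniquely
`d + ∑ nᵢ uᵢ` with `n ∈ ℕᵏ` and `d` a lattice point of the box with coefficients in `(0, 1]`
(resp. `[0, 1)`), by linear independence of the `uᵢ`. Since `x ↦ q ^ ((A + C)·x − (B·x) s)` is
an additive character `ψ`, the generating function factors as the finite box sum times the
geometric series `∏ (1 − ψ uᵢ)⁻¹`. Replacing `q` by `q⁻¹` replaces `ψ` by `ψ⁻¹`; then
`(1 − r⁻¹)⁻¹ = −r (1 − r)⁻¹` and the reflection `e ↦ ∑ uᵢ − e`, which exchanges the two boxes,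
turn the expression into `(−1)ᵏ` times the sum over the closed cone, the closure of `F₀`.
-/

open Finset

section PiTsum

variable {β R : Type*}

theorem summable_norm_prod_pi [NormedCommRing R] :
    ∀ {k : ℕ} {f : Fin k → β → R}, (∀ i, Summable fun n => ‖f i n‖) →
      Summable fun n : Fin k → β => ‖∏ i, f i (n i)‖
  | 0, _, _ => Summable.of_finite
  | k + 1, f, hf => by
    refine (Fin.consEquiv fun _ => β).summable_iff.mp ?_
    convert (hf 0).mul_norm (summable_norm_prod_pi fun i => hf i.succ) using 2 with p
    simp [Fin.consEquiv, Fin.prod_univ_succ]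

theorem tsum_prod_pi [NormedCommRing R] [CompleteSpace R] :
    ∀ {k : ℕ} {f : Fin k → β → R}, (∀ i, Summable fun n => ‖f i n‖) →
      ∑' n : Fin k → β, ∏ i, f i (n i) = ∏ i, ∑' n, f i n
  | 0, _, _ => by simp
  | k + 1, f, hf => by
    rw [← (Fin.consEquiv fun _ => β).tsum_eq, Fin.prod_univ_succ,
      ← tsum_prod_pi fun i => hf i.succ,
      tsum_mul_tsum_of_summable_norm (hf 0) (summable_norm_prod_pi fun i => hf i.succ)]
    simp [Fin.consEquiv, Fin.prod_univ_succ]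

theorem tsum_prod_pow_eq_prod_inv_one_sub {K : Type*} [NormedField K] [CompleteSpace K] {k : ℕ}
    {r : Fin k → K} (hr : ∀ i, ‖r i‖ < 1) :
    ∑' n : Fin k → ℕ, ∏ i, r i ^ n i = ∏ i, (1 - r i)⁻¹ := by
  rw [tsum_prod_pi fun i => summable_norm_geometric_of_norm_lt_one (hr i)]
  exact prod_congr rfl fun i _ => tsum_geometric_of_norm_lt_one (hr i)

end PiTsum

theorem inv_one_sub_inv {K : Type*} [Field K] {r : K} (hr : r ≠ 0) :
    (1 - r⁻¹)⁻¹ = -r * (1 - r)⁻¹ := by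
  rw [show 1 - r⁻¹ = -(1 - r) * r⁻¹ by field_simp; ring, mul_inv, inv_inv, inv_neg, neg_mul,
    mul_comm, neg_mul]

theorem AddChar.map_sum_eq_prod {ι A M : Type*} [AddCommMonoid A] [CommMonoid M]
    (ψ : AddChar A M) (s : Finset ι) (f : ι → A) : ψ (∑ i ∈ s, f i) = ∏ i ∈ s, ψ (f i) := by
  change ψ.toMonoidHom (Multiplicative.ofAdd (∑ i ∈ s, f i)) = _
  rw [ofAdd_sum, map_prod]
  rfl

theorem closure_setOf_sum_smul_pos {ι E : Type*} [Fintype ι] [AddCommGroup E] [TopologicalSpace E]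
    [IsTopologicalAddGroup E] [Module ℝ E] [ContinuousSMul ℝ E] [T2Space E] {v : ι → E}
    (hv : LinearIndependent ℝ v) :
    closure {y | ∃ c : ι → ℝ, (∀ i, 0 < c i) ∧ y = ∑ i, c i • v i} =
      {y | ∃ c : ι → ℝ, (∀ i, 0 ≤ c i) ∧ y = ∑ i, c i • v i} := by
  have hL : Topology.IsClosedEmbedding (Fintype.linearCombination ℝ v) :=
    LinearMap.isClosedEmbedding_of_injective <| LinearMap.ker_eq_bot.mpr <|
      linearIndependent_iff_injective_fintypeLinearCombination.mp hv
  have himage : ∀ T : Set ℝ, {y | ∃ c : ι → ℝ, (∀ i, c i ∈ T) ∧ y = ∑ i, c i • v i} =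
      Fintype.linearCombination ℝ v '' Set.univ.pi fun _ => T := by
    intro T
    ext y
    simp [Fintype.linearCombination_apply, eq_comm]
  simp only [← Set.mem_Ioi, ← Set.mem_Ici]
  rw [himage, himage, hL.closure_image_eq, closure_pi_set, closure_Ioi]

theorem exists_nat_sub_mem_Ioc {t : ℝ} (ht : 0 < t) : ∃ n : ℕ, t - n ∈ Set.Ioc 0 1 := by
  refine ⟨⌈t⌉₊ - 1, ?_⟩
  rw [Nat.cast_sub (Nat.one_le_ceil_iff.mpr ht), Nat.cast_one]
  exact ⟨by linarith [Nat.ceil_lt_add_one ht.le], by linarith [Nat.le_ceil t]⟩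

theorem exists_nat_sub_mem_Ico {t : ℝ} (ht : 0 ≤ t) : ∃ n : ℕ, t - n ∈ Set.Ico 0 1 :=
  ⟨⌊t⌋₊, by linarith [Nat.floor_le ht], by linarith [Nat.lt_floor_add_one t]⟩

section ConeLatticePoints

variable {κ : Type*} {k : ℕ} (u : Fin k → κ → ℤ)

/-- `coneLatticePoints u (Set.Ioi 0)` is `F₀ ∩ ℤᵐ`, `coneLatticePoints u (Set.Ioc 0 1)` is `D₁`. -/
def coneLatticePoints (S : Set ℝ) : Set (κ → ℤ) :=
  {x | ∃ c : Fin k → ℝ, (∀ i, c i ∈ S) ∧ (fun j => (x j : ℝ)) = ∑ i, c i • fun j => (u i j : ℝ)}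

theorem intCast_add_sum_nsmul (d : κ → ℤ) (n : Fin k → ℕ) :
    (fun j => ((d + ∑ i, n i • u i) j : ℝ)) =
      (fun j => (d j : ℝ)) + ∑ i, (n i : ℝ) • fun j => (u i j : ℝ) := by
  ext j
  simp [Finset.sum_apply]

variable {u} {I S : Set ℝ}

theorem add_sum_nsmul_mem_coneLatticePoints (hIS : ∀ μ ∈ I, ∀ n : ℕ, μ + n ∈ S)
    {d : κ → ℤ} (hd : d ∈ coneLatticePoints u I) (n : Fin k → ℕ) :
    d + ∑ i, n i • u i ∈ coneLatticePoints u S := by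
  obtain ⟨μ, hμ, hd⟩ := hd
  refine ⟨μ + fun i => (n i : ℝ), fun i => hIS _ (hμ i) _, ?_⟩
  rw [intCast_add_sum_nsmul, hd]
  simp only [Pi.add_apply, add_smul, sum_add_distrib]

variable (u) in
def shiftByNat (hIS : ∀ μ ∈ I, ∀ n : ℕ, μ + n ∈ S) :
    coneLatticePoints u I × (Fin k → ℕ) → coneLatticePoints u S :=
  fun p => ⟨p.1 + ∑ i, p.2 i • u i, add_sum_nsmul_mem_coneLatticePoints hIS p.1.2 p.2⟩

theorem shiftByNat_injective (hu : LinearIndependent ℝ fun i j => (u i j : ℝ))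
    (hIS : ∀ μ ∈ I, ∀ n : ℕ, μ + n ∈ S) (hI : ∀ μ ∈ I, ∀ μ' ∈ I, |μ - μ'| < 1) :
    Function.Injective (shiftByNat u hIS) := by
  rintro ⟨⟨d, μ, hμ, hd⟩, n⟩ ⟨⟨d', μ', hμ', hd'⟩, n'⟩ h
  have hsum : d + ∑ i, n i • u i = d' + ∑ i, n' i • u i := congrArg Subtype.val h
  have hcoeff : ∀ i, μ i + n i = μ' i + n' i := by
    refine Fintype.linearIndependent_iffₛ.mp hu _ _ ?_
    have := congrArg (fun x : κ → ℤ => fun j => (x j : ℝ)) hsum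
    simpa only [intCast_add_sum_nsmul, hd, hd', add_smul, sum_add_distrib] using this
  have hn : n = n' := by
    ext i
    have hdiff : |((n' i : ℤ) - n i : ℤ)| < 1 := by
      have := hI _ (hμ i) _ (hμ' i)
      rw [show μ i - μ' i = ((n' i : ℤ) - n i : ℤ) by push_cast; linarith [hcoeff i]] at this
      exact_mod_cast this
    have := Int.abs_lt_one_iff.mp hdiff
    omega
  subst hn
  obtain rfl : d = d' := add_right_cancel hsum
  rfl

theorem shiftByNat_surjective (hIS : ∀ μ ∈ I, ∀ n : ℕ, μ + n ∈ S)
    (hSI : ∀ t ∈ S, ∃ n : ℕ, t - n ∈ I) : Function.Surjective (shiftByNat u hIS) := by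
  rintro ⟨x, c, hc, hx⟩
  choose n hn using fun i => hSI _ (hc i)
  refine ⟨⟨⟨x - ∑ i, n i • u i, fun i => c i - n i, hn, ?_⟩, n⟩, Subtype.ext (sub_add_cancel _ _)⟩
  have := intCast_add_sum_nsmul u (x - ∑ i, n i • u i) n
  rw [sub_add_cancel, hx] at this
  simp only [sub_smul, sum_sub_distrib, this, add_sub_cancel_right]

theorem coneLatticePoints_finite [Finite κ] (hI : I ⊆ Set.Icc 0 1) :
    (coneLatticePoints u I).Finite := by
  refine (Set.Finite.pi fun j => Set.finite_Icc (-∑ i, |u i j|) (∑ i, |u i j|)).subset ?_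
  rintro x ⟨c, hc, hx⟩ j -
  rw [Set.mem_Icc, ← abs_le]
  have hxj : (x j : ℝ) = ∑ i, c i * u i j := by simpa using congrFun hx j
  have : |(x j : ℝ)| ≤ ∑ i, |(u i j : ℝ)| := by
    rw [hxj]
    refine (abs_sum_le_sum_abs _ _).trans (sum_le_sum fun i _ => ?_)
    rw [abs_mul]
    exact mul_le_of_le_one_left (abs_nonneg _)
      (abs_le.mpr ⟨by linarith [(hI (hc i)).1], (hI (hc i)).2⟩)
  exact_mod_cast this

end ConeLatticePoints

section GeneratingFunction

variable {κ K : Type*} [NormedField K] [CompleteSpace K] {k : ℕ} {u : Fin k → κ → ℤ}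

theorem tsum_coneLatticePoints_eq [Finite κ] {I S : Set ℝ}
    (hu : LinearIndependent ℝ fun i j => (u i j : ℝ))
    (hIS : ∀ μ ∈ I, ∀ n : ℕ, μ + n ∈ S) (hSI : ∀ t ∈ S, ∃ n : ℕ, t - n ∈ I)
    (hI : ∀ μ ∈ I, ∀ μ' ∈ I, |μ - μ'| < 1) (hI01 : I ⊆ Set.Icc 0 1)
    (ψ : AddChar (κ → ℤ) K) (hψ : ∀ i, ‖ψ (u i)‖ < 1) :
    ∑' x : coneLatticePoints u S, ψ x =
      (∑' d : coneLatticePoints u I, ψ d) * ∏ i, (1 - ψ (u i))⁻¹ := by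
  have : Finite (coneLatticePoints u I) := (coneLatticePoints_finite hI01).to_subtype
  have hψshift : ∀ p, ψ (shiftByNat u hIS p) = ψ p.1 * ∏ i, ψ (u i) ^ p.2 i := fun p => by
    simp only [shiftByNat, AddChar.map_add_eq_mul, AddChar.map_sum_eq_prod,
      AddChar.map_nsmul_eq_pow]
  let e := Equiv.ofBijective _ ⟨shiftByNat_injective hu hIS hI, shiftByNat_surjective hIS hSI⟩
  rw [← e.tsum_eq, ← tsum_prod_pow_eq_prod_inv_one_sub hψ,
    tsum_mul_tsum_of_summable_norm Summable.of_finite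
      (summable_norm_prod_pi fun i => summable_norm_geometric_of_norm_lt_one (hψ i))]
  exact tsum_congr fun p => hψshift p

theorem tsum_coneLatticePoints_Ioi_eq [Finite κ] (hu : LinearIndependent ℝ fun i j => (u i j : ℝ))
    (ψ : AddChar (κ → ℤ) K) (hψ : ∀ i, ‖ψ (u i)‖ < 1) :
    ∑' x : coneLatticePoints u (Set.Ioi 0), ψ x =
      (∑' d : coneLatticePoints u (Set.Ioc 0 1), ψ d) * ∏ i, (1 - ψ (u i))⁻¹ :=
  tsum_coneLatticePoints_eq hu (fun μ hμ n => add_pos_of_pos_of_nonneg hμ.1 n.cast_nonneg)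
    (fun _ => exists_nat_sub_mem_Ioc)
    (fun μ hμ μ' hμ' => abs_sub_lt_iff.mpr ⟨by linarith [hμ.2, hμ'.1], by linarith [hμ.1, hμ'.2]⟩)
    Set.Ioc_subset_Icc_self ψ hψ

theorem tsum_coneLatticePoints_Ici_eq [Finite κ] (hu : LinearIndependent ℝ fun i j => (u i j : ℝ))
    (ψ : AddChar (κ → ℤ) K) (hψ : ∀ i, ‖ψ (u i)‖ < 1) :
    ∑' x : coneLatticePoints u (Set.Ici 0), ψ x =
      (∑' d : coneLatticePoints u (Set.Ico 0 1), ψ d) * ∏ i, (1 - ψ (u i))⁻¹ :=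
  tsum_coneLatticePoints_eq hu (fun μ hμ n => add_nonneg hμ.1 n.cast_nonneg)
    (fun _ => exists_nat_sub_mem_Ico)
    (fun μ hμ μ' hμ' => abs_sub_lt_iff.mpr ⟨by linarith [hμ.2, hμ'.1], by linarith [hμ.1, hμ'.2]⟩)
    Set.Ico_subset_Icc_self ψ hψ

theorem sum_sub_mem_coneLatticePoints {S T : Set ℝ} (hST : ∀ t ∈ S, 1 - t ∈ T) {x : κ → ℤ}
    (hx : x ∈ coneLatticePoints u S) : ∑ i, u i - x ∈ coneLatticePoints u T := by
  obtain ⟨c, hc, hx⟩ := hx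
  refine ⟨fun i => 1 - c i, fun i => hST _ (hc i), ?_⟩
  ext j
  have := congrFun hx j
  simp only [Finset.sum_apply, Pi.smul_apply, smul_eq_mul] at this
  simp [Finset.sum_apply, sub_mul, this]

variable (u) in
def coneLatticePointsIocEquivIco :
    coneLatticePoints u (Set.Ioc 0 1) ≃ coneLatticePoints u (Set.Ico 0 1) :=
  (Equiv.subLeft (∑ i, u i)).subtypeEquiv fun x =>
    ⟨sum_sub_mem_coneLatticePoints fun _ ht => by exact ⟨sub_nonneg.mpr ht.2, sub_lt_self _ ht.1⟩,
      fun h => by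
        simpa using sum_sub_mem_coneLatticePoints
          (fun _ ht => by exact ⟨sub_pos.mpr ht.2, sub_le_self _ ht.1⟩) h⟩

theorem tsum_coneLatticePoints_Ioc_inv_mul_prod_eq [Finite κ]
    (hu : LinearIndependent ℝ fun i j => (u i j : ℝ))
    (ψ : AddChar (κ → ℤ) K) (hψ : ∀ i, ‖ψ (u i)‖ < 1) :
    (∑' e : coneLatticePoints u (Set.Ioc 0 1), ψ⁻¹ e) * ∏ i, (1 - ψ⁻¹ (u i))⁻¹ =
      (-1) ^ k * ∑' x : coneLatticePoints u (Set.Ici 0), ψ x := by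
  have hprod : ∏ i, (1 - ψ⁻¹ (u i))⁻¹ = (-1) ^ k * ψ (∑ i, u i) * ∏ i, (1 - ψ (u i))⁻¹ := by
    simp only [AddChar.inv_apply', inv_one_sub_inv (ψ.val_isUnit _).ne_zero, prod_mul_distrib,
      prod_neg, card_univ, Fintype.card_fin, AddChar.map_sum_eq_prod]
  have hreflect : (∑' e : coneLatticePoints u (Set.Ioc 0 1), ψ⁻¹ e) * ψ (∑ i, u i) =
      ∑' d : coneLatticePoints u (Set.Ico 0 1), ψ d := by
    rw [← tsum_mul_right, ← (coneLatticePointsIocEquivIco u).tsum_eq]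
    refine tsum_congr fun e => ?_
    rw [AddChar.inv_apply, ← AddChar.map_add_eq_mul, neg_add_eq_sub]
    rfl
  rw [hprod, tsum_coneLatticePoints_Ici_eq hu ψ hψ, ← hreflect]
  ring

end GeneratingFunction

section CpowAddChar

variable {G : Type*}

noncomputable def cpowAddChar [AddMonoid G] (q : ℂ) (hq : q ≠ 0) (f : G →+ ℂ) :
    AddChar G ℂ where
  toFun x := q ^ f x
  map_zero_eq_one' := by simp
  map_add_eq_mul' x y := by rw [map_add, Complex.cpow_add _ _ hq]

theorem norm_cpowAddChar [AddMonoid G] {q : ℝ} (hq : 0 < q) (f : G →+ ℂ) (x : G) :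
    ‖cpowAddChar q (Complex.ofReal_ne_zero.mpr hq.ne') f x‖ = q ^ (f x).re :=
  Complex.norm_cpow_eq_rpow_re_of_pos hq _

theorem inv_cpowAddChar [AddCommGroup G] {q : ℝ} (hq : 0 < q) (f : G →+ ℂ) :
    (cpowAddChar q (Complex.ofReal_ne_zero.mpr hq.ne') f)⁻¹ =
      cpowAddChar ((q⁻¹ : ℝ) : ℂ) (Complex.ofReal_ne_zero.mpr (inv_pos.mpr hq).ne') f := by
  ext x
  rw [AddChar.inv_apply']
  refine (Complex.ofReal_inv q ▸ Complex.inv_cpow _ _ ?_).symm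
  rw [Complex.arg_ofReal_of_nonneg hq.le]
  exact Real.pi_ne_zero.symm

end CpowAddChar

def exponentHom {κ : Type*} [Fintype κ] (a b : κ → ℤ) (s : ℂ) : (κ → ℤ) →+ ℂ :=
  AddMonoidHom.mk' (fun x => ((a ⬝ᵥ x : ℤ) : ℂ) - ((b ⬝ᵥ x : ℤ) : ℂ) * s) fun x y => by
    simp only [dotProduct_add]
    push_cast
    ring

theorem stmt10_general (m k : ℕ) (u : Fin k → (Fin m → ℤ))
    (hu : LinearIndependent ℝ fun i => fun j => ((u i j : ℝ)))
    (A C B : Fin m → ℤ)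
    (q : ℝ) (hq : 1 < q) (s : ℂ)
    (hconv : ∀ i, ((∑ j, (A j + C j) * u i j : ℤ) : ℝ) -
        ((∑ j, B j * u i j : ℤ) : ℝ) * s.re < 0) :
    (∑' x : {x : Fin m → ℤ // (fun j => (x j : ℝ)) ∈
          {y : Fin m → ℝ | ∃ lam : Fin k → ℝ, (∀ i, 0 < lam i) ∧
            y = ∑ i, lam i • fun j => ((u i j : ℝ))}},
        (q : ℂ) ^ (((∑ j, (A j + C j) * x.1 j : ℤ) : ℂ) -
          ((∑ j, B j * x.1 j : ℤ) : ℂ) * s)) =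
      (∑' e : {e : Fin m → ℤ // ∃ μ : Fin k → ℝ, (∀ i, μ i ∈ Set.Ioc (0 : ℝ) 1) ∧
            (fun j => (e j : ℝ)) = ∑ i, μ i • fun j => ((u i j : ℝ))},
          (q : ℂ) ^ (((∑ j, (A j + C j) * e.1 j : ℤ) : ℂ) -
            ((∑ j, B j * e.1 j : ℤ) : ℂ) * s)) *
        ∏ i : Fin k, (1 - (q : ℂ) ^ (((∑ j, (A j + C j) * u i j : ℤ) : ℂ) -
            ((∑ j, B j * u i j : ℤ) : ℂ) * s))⁻¹ ∧
    (∑' e : {e : Fin m → ℤ // ∃ μ : Fin k → ℝ, (∀ i, μ i ∈ Set.Ioc (0 : ℝ) 1) ∧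
          (fun j => (e j : ℝ)) = ∑ i, μ i • fun j => ((u i j : ℝ))},
        ((q⁻¹ : ℝ) : ℂ) ^ (((∑ j, (A j + C j) * e.1 j : ℤ) : ℂ) -
          ((∑ j, B j * e.1 j : ℤ) : ℂ) * s)) *
      ∏ i : Fin k, (1 - ((q⁻¹ : ℝ) : ℂ) ^ (((∑ j, (A j + C j) * u i j : ℤ) : ℂ) -
          ((∑ j, B j * u i j : ℤ) : ℂ) * s))⁻¹ =
      (-1 : ℂ) ^ k *
        ∑' x : {x : Fin m → ℤ // (fun j => (x j : ℝ)) ∈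
            closure {y : Fin m → ℝ | ∃ lam : Fin k → ℝ, (∀ i, 0 < lam i) ∧
              y = ∑ i, lam i • fun j => ((u i j : ℝ))}},
          (q : ℂ) ^ (((∑ j, (A j + C j) * x.1 j : ℤ) : ℂ) -
            ((∑ j, B j * x.1 j : ℤ) : ℂ) * s) := by
  have hq0 : 0 < q := one_pos.trans hq
  have hψ : ∀ i, ‖cpowAddChar q _ (exponentHom (A + C) B s) (u i)‖ < 1 := fun i => by
    rw [norm_cpowAddChar hq0]
    refine Real.rpow_lt_one_of_one_lt_of_neg hq ?_
    simpa [exponentHom, dotProduct] using hconv i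
  refine ⟨tsum_coneLatticePoints_Ioi_eq hu _ hψ, ?_⟩
  rw [closure_setOf_sum_smul_pos hu]
  have hreciprocity := tsum_coneLatticePoints_Ioc_inv_mul_prod_eq hu _ hψ
  rw [inv_cpowAddChar hq0] at hreciprocity
  exact hreciprocity

/-- Stanley-type reciprocity for the generating function of a relatively open
simplicial cone `F₀` generated by independent `u₁,…,u_k ∈ ℤ^m`:
`E(q, q^{-s}) = ∑_{e∈F₀∩ℤ^m} q^{(A+C)·e − (B·e)s}` equals the rational expression
`(∑_{e∈D₁} q^{(A+C)·e − (B·e)s}) · ∏ᵢ (1 − q^{(A+C)·uᵢ − (B·uᵢ)s})⁻¹`, and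
substituting `q → q⁻¹` in that expression yields
`(−1)^k ∑_{e ∈ closure(F₀) ∩ ℤ^m} q^{(A+C)·e − (B·e)s}`. -/
theorem stmt10 (m k : ℕ) (u : Fin k → (Fin m → ℤ))
    (hu : LinearIndependent ℝ fun i => fun j => ((u i j : ℝ)))
    (A C B : Fin m → ℤ) (hB : ∀ i, 0 < ∑ j, B j * u i j)
    (q : ℝ) (hq : 1 < q) (s : ℂ)
    (hconv : ∀ i, ((∑ j, (A j + C j) * u i j : ℤ) : ℝ) -
        ((∑ j, B j * u i j : ℤ) : ℝ) * s.re < 0) :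
    (∑' x : {x : Fin m → ℤ // (fun j => (x j : ℝ)) ∈
          {y : Fin m → ℝ | ∃ lam : Fin k → ℝ, (∀ i, 0 < lam i) ∧
            y = ∑ i, lam i • fun j => ((u i j : ℝ))}},
        (q : ℂ) ^ (((∑ j, (A j + C j) * x.1 j : ℤ) : ℂ) -
          ((∑ j, B j * x.1 j : ℤ) : ℂ) * s)) =
      (∑' e : {e : Fin m → ℤ // ∃ μ : Fin k → ℝ, (∀ i, μ i ∈ Set.Ioc (0 : ℝ) 1) ∧
            (fun j => (e j : ℝ)) = ∑ i, μ i • fun j => ((u i j : ℝ))},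
          (q : ℂ) ^ (((∑ j, (A j + C j) * e.1 j : ℤ) : ℂ) -
            ((∑ j, B j * e.1 j : ℤ) : ℂ) * s)) *
        ∏ i : Fin k, (1 - (q : ℂ) ^ (((∑ j, (A j + C j) * u i j : ℤ) : ℂ) -
            ((∑ j, B j * u i j : ℤ) : ℂ) * s))⁻¹ ∧
    (∑' e : {e : Fin m → ℤ // ∃ μ : Fin k → ℝ, (∀ i, μ i ∈ Set.Ioc (0 : ℝ) 1) ∧
          (fun j => (e j : ℝ)) = ∑ i, μ i • fun j => ((u i j : ℝ))},
        ((q⁻¹ : ℝ) : ℂ) ^ (((∑ j, (A j + C j) * e.1 j : ℤ) : ℂ) -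
          ((∑ j, B j * e.1 j : ℤ) : ℂ) * s)) *
      ∏ i : Fin k, (1 - ((q⁻¹ : ℝ) : ℂ) ^ (((∑ j, (A j + C j) * u i j : ℤ) : ℂ) -
          ((∑ j, B j * u i j : ℤ) : ℂ) * s))⁻¹ =
      (-1 : ℂ) ^ k *
        ∑' x : {x : Fin m → ℤ // (fun j => (x j : ℝ)) ∈
            closure {y : Fin m → ℝ | ∃ lam : Fin k → ℝ, (∀ i, 0 < lam i) ∧
              y = ∑ i, lam i • fun j => ((u i j : ℝ))}},
          (q : ℂ) ^ (((∑ j, (A j + C j) * x.1 j : ℤ) : ℂ) -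
            ((∑ j, B j * x.1 j : ℤ) : ℂ) * s) :=
  stmt10_general m k u hu A C B q hq s hconv
end

section
/- Let W be a finite group, q a nonzero element of a field, and suppose for each w ∈ W we have rational functions E_w and E'_w in q, q^{−s} satisfying: (i) E_{I_w} inverts as E_{I_w}|_{q→q^{−1}} = (−1)^m E_{[m]∖I_w}, (ii) E_{[m]∖I_w} = q^{M} E_{[l]∖I_w} for a fixed monomial q^M = q^{(A+γ_0)·a_0 − (B·a_0)s} independent of w, and (iii) the re-indexing [l]∖I_w = I_{w w_0} with λ(w) + λ(w w_0) = |Φ^+|. Then Z := ∑_{w∈W} q^{−λ(w)} E_{I_w} satisfies Z|_{q→q^{−1}} = (−1)^m q^{|Φ^+| + (A+γ_0)·a_0 − (B·a_0)s} Z. -/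
theorem stmt13_general {W : Type*} [Group W] [Fintype W] {K : Type*} [Field K]
    (m N : ℕ) (q qM : K) (hq : q ≠ 0)
    (E Einv : Finset (Fin m) → K)
    (lam : W → ℕ) (I : W → Finset (Fin m)) (w0 : W)
    (L : Finset (Fin m))
    (hi : ∀ w : W, Einv (I w) = (-1 : K) ^ m * E (Finset.univ \ I w))
    (hii : ∀ w : W, E (Finset.univ \ I w) = qM * E (L \ I w))
    (hiii : ∀ w : W, L \ I w = I (w * w0))
    (hlen : ∀ w : W, lam w + lam (w * w0) = N) :
    ∑ w : W, q ^ ((lam w : ℤ)) * Einv (I w) =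
      (-1 : K) ^ m * q ^ (N : ℤ) * qM * ∑ w : W, q ^ (-(lam w : ℤ)) * E (I w) := by
  rw [Finset.mul_sum]
  -- The summand at `w` on the left matches the summand at `w * w0` on the right.
  refine Fintype.sum_equiv (Equiv.mulRight w0) _ _ fun w => ?_
  have hsplit : q ^ (lam w : ℤ) = q ^ (N : ℤ) * q ^ (-(lam (w * w0) : ℤ)) := by
    rw [← zpow_add₀ hq, ← hlen w]
    push_cast
    congr 1
    ring
  rw [Equiv.coe_mulRight, hi, hii, hiii, hsplit]
  ring

/-- Abstract functional equation for a weighted sum over a finite Weyl group: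
if each summand `E_{I_w}` inverts as `E_{I_w}|_{q→q⁻¹} = (−1)^m E_{[m]∖I_w}`
(encoded by `Einv`), if `E_{[m]∖I_w} = q^M E_{[l]∖I_w}` for a fixed monomial `qM`,
and if `[l]∖I_w = I_{w w₀}` with `λ(w) + λ(w w₀) = |Φ⁺|`, then
`Z = ∑_w q^{−λ(w)} E_{I_w}` satisfies
`Z|_{q→q⁻¹} = (−1)^m q^{|Φ⁺|} qM Z`. -/
theorem stmt13 {W : Type*} [Group W] [Fintype W] {K : Type*} [Field K]
    (m l N : ℕ) (q qM : K) (hq : q ≠ 0)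
    (E Einv : Finset (Fin m) → K)
    (lam : W → ℕ) (I : W → Finset (Fin m)) (w0 : W)
    (L : Finset (Fin m)) (hL : L = Finset.univ.filter (fun i : Fin m => i.val < l))
    (hIL : ∀ w : W, I w ⊆ L)
    (hi : ∀ w : W, Einv (I w) = (-1 : K) ^ m * E (Finset.univ \ I w))
    (hii : ∀ w : W, E (Finset.univ \ I w) = qM * E (L \ I w))
    (hiii : ∀ w : W, L \ I w = I (w * w0))
    (hlen : ∀ w : W, lam w + lam (w * w0) = N) :
    ∑ w : W, q ^ ((lam w : ℤ)) * Einv (I w) =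
      (-1 : K) ^ m * q ^ (N : ℤ) * qM * ∑ w : W, q ^ (-(lam w : ℤ)) * E (I w) :=
  stmt13_general m N q qM hq E Einv lam I w0 L hi hii hiii hlen
end
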